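/- Let n be a positive perfect square and set Q = [n^{1/2}, 0, −n^{1/2}], viewed as the real symmetric matrix (n^{1/2}, 0; 0, −n^{1/2}). For θ ∈ [0, 2π) and t ∈ ℝ let k(θ) = (cos(θ/2), −sin(θ/2); sin(θ/2), cos(θ/2)) and a(t) = (e^{t/2}, 0; 0, e^{−t/2}), and let g·Q := gQgᵀ denote the congruence action on real binary quadratic forms (identified with real symmetric 2×2 matrices (a, b/2; b/2, c)). Let Q₁ = [n^{1/2}, 0, 0] (the highest-weight component of Q), define the norm ‖[a,b,c]‖ = max(|a|, |b|/3, |c|) on real forms, let F_T = {[a,b,c] : |a| ≤ T, |c| ≤ T, a > c, b ≥ 0} (real forms), and let Θ = {θ ∈ [0, 2π) : k(θ)·Q₁ ∈ ⋃_{r ≥ 0} r·F_1}. Then, as T → ∞, ∬_{{(θ,t) : (k(θ)a(t))·Q ∈ F_T}} (cosh t)/4 dθ dt ∼ (T/4)·∫_{Θ} ‖k(θ)·Q₁‖^{−1} dθ; that is, the ratio of the two sides tends to 1. -/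

import Mathlib

/-!
In the coordinates `(θ, t)` the form `(k(θ) a(t))·Q` is
`√n · [sinh t + cos θ cosh t, 2 sin θ cosh t, sinh t - cos θ cosh t]`. The conditions `a > c`,
`b ≥ 0` cut out `θ ∈ [0, π/2)`, and the box conditions say `|sinh t| + cos θ cosh t ≤ T/√n`, that
is `|sinh t| ≤ u` where `u + cos θ √(1 + u²) = T/√n`. The `t`-integral of `cosh t / 4` over this
interval is `u / 2`, and `u ∼ (T/√n) / (1 + cos θ)`; by dominated convergence the left side is
`∼ (T / 2√n) ∫₀^{π/2} (1 + cos θ)⁻¹ dθ`. On the other side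
`k(θ)·Q₁ = (√n/2) [1 + cos θ, 2 sin θ, 1 - cos θ]` lies in the cone over `F_1` exactly for
`θ ∈ [0, π/2)`, where its norm is `(√n/2)(1 + cos θ)`, so the right side is
`(T / 2√n) ∫₀^{π/2} (1 + cos θ)⁻¹ dθ` as well.
-/

open Filter Real MeasureTheory Matrix

/-- `k(θ) = (cos(θ/2), -sin(θ/2); sin(θ/2), cos(θ/2))`. -/
noncomputable def kRot (θ : ℝ) : Matrix (Fin 2) (Fin 2) ℝ :=
  !![Real.cos (θ / 2), -Real.sin (θ / 2); Real.sin (θ / 2), Real.cos (θ / 2)]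

/-- `a(t) = (e^{t/2}, 0; 0, e^{-t/2})`. -/
noncomputable def aDiag (t : ℝ) : Matrix (Fin 2) (Fin 2) ℝ :=
  !![Real.exp (t / 2), 0; 0, Real.exp (-t / 2)]

/-- The congruence action `g · Q = g Q gᵀ` on real binary quadratic forms, identified
with real symmetric `2 × 2` matrices `(a, b/2; b/2, c)`. -/
def congrAct (g M : Matrix (Fin 2) (Fin 2) ℝ) : Matrix (Fin 2) (Fin 2) ℝ :=
  g * M * gᵀ

/-- The norm `‖[a,b,c]‖ = max(|a|, |b|/3, |c|)` on real binary quadratic forms,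
written in terms of the associated symmetric matrix (`b = 2 M₀₁`). -/
noncomputable def formNorm (M : Matrix (Fin 2) (Fin 2) ℝ) : ℝ :=
  max |M 0 0| (max (|2 * M 0 1| / 3) |M 1 1|)

/-- The region `F_T = {[a,b,c] : |a| ≤ T, |c| ≤ T, a > c, b ≥ 0}` of real binary
quadratic forms, written in terms of the associated symmetric matrices. -/
def FTregion (T : ℝ) : Set (Matrix (Fin 2) (Fin 2) ℝ) :=
  {M | |M 0 0| ≤ T ∧ |M 1 1| ≤ T ∧ M 1 1 < M 0 0 ∧ 0 ≤ M 0 1}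

open Topology

lemma sqrt_one_add_sq_sub_lt {x y : ℝ} (h : x < y) : √(1 + x ^ 2) - √(1 + y ^ 2) < y - x := by
  have ha : √(1 + x ^ 2) ^ 2 = 1 + x ^ 2 := sq_sqrt (by positivity)
  have hb : √(1 + y ^ 2) ^ 2 = 1 + y ^ 2 := sq_sqrt (by positivity)
  have hxa : |x| < √(1 + x ^ 2) := by
    rw [← sqrt_sq_eq_abs]; exact sqrt_lt_sqrt (sq_nonneg x) (by linarith)
  have hyb : |y| < √(1 + y ^ 2) := by
    rw [← sqrt_sq_eq_abs]; exact sqrt_lt_sqrt (sq_nonneg y) (by linarith)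
  have hxy : -(√(1 + x ^ 2) + √(1 + y ^ 2)) < x + y := by
    linarith [neg_abs_le x, neg_abs_le y]
  have hsum : 0 < √(1 + x ^ 2) + √(1 + y ^ 2) := by positivity
  refine lt_of_mul_lt_mul_right ?_ hsum.le
  calc (√(1 + x ^ 2) - √(1 + y ^ 2)) * (√(1 + x ^ 2) + √(1 + y ^ 2))
      = (y - x) * -(x + y) := by linear_combination ha - hb
    _ < (y - x) * (√(1 + x ^ 2) + √(1 + y ^ 2)) :=
      mul_lt_mul_of_pos_left (by linarith) (sub_pos.2 h)

lemma strictMono_add_mul_sqrt_one_add_sq {k : ℝ} (hk0 : 0 ≤ k) (hk1 : k ≤ 1) :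
    StrictMono fun x : ℝ => x + k * √(1 + x ^ 2) := by
  intro x y hxy
  have h := sqrt_one_add_sq_sub_lt hxy
  rcases le_or_gt (√(1 + x ^ 2) - √(1 + y ^ 2)) 0 with hle | hpos <;> nlinarith

lemma abs_add_le_and_abs_sub_le_iff {x y S : ℝ} : |x + y| ≤ S ∧ |x - y| ≤ S ↔ |x| + |y| ≤ S := by
  constructor
  · rintro ⟨h₁, h₂⟩
    rcases abs_cases x with ⟨hx, _⟩ | ⟨hx, _⟩ <;> rcases abs_cases y with ⟨hy, _⟩ | ⟨hy, _⟩ <;>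
      linarith [le_abs_self (x + y), neg_abs_le (x + y), le_abs_self (x - y), neg_abs_le (x - y)]
  · intro h
    exact ⟨(abs_add_le x y).trans h, (abs_sub x y).trans h⟩

lemma abs_sinh_le_iff {t u : ℝ} : |sinh t| ≤ u ↔ t ∈ Set.Icc (-arsinh u) (arsinh u) := by
  rw [abs_sinh, ← sinh_arsinh u, sinh_le_sinh, sinh_arsinh]
  exact abs_le

lemma integral_cosh_Icc_neg_self {τ : ℝ} (hτ : 0 ≤ τ) :
    ∫ t in Set.Icc (-τ) τ, cosh t = 2 * sinh τ := by
  rw [integral_Icc_eq_integral_Ioc, ← intervalIntegral.integral_of_le (by linarith),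
    intervalIntegral.integral_eq_sub_of_hasDerivAt (fun t _ => hasDerivAt_sinh t)
      (continuous_cosh.intervalIntegrable _ _), sinh_neg]
  ring

lemma indicator_setOf_abs_sinh_le_apply (A : Set ℝ) (u : ℝ → ℝ) (θ t : ℝ) :
    {p : ℝ × ℝ | p.1 ∈ A ∧ |sinh p.2| ≤ u p.1}.indicator (fun p => cosh p.2) (θ, t) =
      A.indicator (fun θ => (Set.Icc (-arsinh (u θ)) (arsinh (u θ))).indicator cosh) θ t := by
  by_cases hθ : θ ∈ A <;> simp [Set.indicator, hθ, abs_sinh_le_iff]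

lemma integral_cosh_setOf_abs_sinh_le {A : Set ℝ} (hA : MeasurableSet A) {u : ℝ → ℝ}
    (hu : Measurable u) (hu0 : ∀ θ ∈ A, 0 ≤ u θ) (hu_int : IntegrableOn u A) :
    ∫ p in {p : ℝ × ℝ | p.1 ∈ A ∧ |sinh p.2| ≤ u p.1}, cosh p.2 = ∫ θ in A, 2 * u θ := by
  set E := {p : ℝ × ℝ | p.1 ∈ A ∧ |sinh p.2| ≤ u p.1}
  have hE : MeasurableSet E :=
    (measurable_fst hA).inter (measurableSet_le (by fun_prop) (hu.comp measurable_fst))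
  have hslice_integrable : ∀ θ, Integrable fun t => E.indicator (fun p => cosh p.2) (θ, t) := by
    intro θ
    simp only [E, indicator_setOf_abs_sinh_le_apply]
    by_cases hθ : θ ∈ A
    · simpa [Set.indicator_of_mem hθ] using
        continuous_cosh.integrableOn_Icc.integrable_indicator measurableSet_Icc
    · simp [Set.indicator_of_notMem hθ]
  have hslice_integral : ∀ θ, ∫ t, E.indicator (fun p => cosh p.2) (θ, t) =
      A.indicator (fun θ => 2 * u θ) θ := by
    intro θ
    simp only [E, indicator_setOf_abs_sinh_le_apply]
    by_cases hθ : θ ∈ A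
    · rw [Set.indicator_of_mem hθ, Set.indicator_of_mem hθ, integral_indicator measurableSet_Icc,
        integral_cosh_Icc_neg_self (arsinh_nonneg_iff.2 (hu0 θ hθ)), sinh_arsinh]
    · simp [Set.indicator_of_notMem hθ]
  have hnonneg : 0 ≤ E.indicator fun p => cosh p.2 :=
    Set.indicator_nonneg fun p _ => (cosh_pos p.2).le
  have hintegrable : Integrable (E.indicator fun p => cosh p.2) (volume.prod volume) := by
    refine (integrable_prod_iff ?_).2 ⟨ae_of_all _ hslice_integrable, ?_⟩
    · exact ((continuous_cosh.comp continuous_snd).measurable.indicator hE).aestronglyMeasurable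
    · simp only [norm_of_nonneg (hnonneg _), hslice_integral]
      exact IntegrableOn.integrable_indicator (hu_int.const_mul 2) hA
  rw [← integral_indicator hE, Measure.volume_eq_prod, integral_prod _ hintegrable]
  simp only [hslice_integral]
  rw [integral_indicator hA]

-- The root of `x + k √(1 + x²) = S`: the quadratic formula with its numerator rationalized, so
-- that it stays valid at `k = 1`.
noncomputable def boxRadius (k S : ℝ) : ℝ :=
  (S ^ 2 - k ^ 2) / (S + k * √(S ^ 2 + 1 - k ^ 2))

@[fun_prop]
lemma Measurable.boxRadius {α : Type*} [MeasurableSpace α] {f g : α → ℝ} (hf : Measurable f)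
    (hg : Measurable g) : Measurable fun x => _root_.boxRadius (f x) (g x) := by
  unfold _root_.boxRadius
  fun_prop

section BoxRadius

variable {k S : ℝ}

lemma boxRadius_nonneg (hk0 : 0 ≤ k) (hk1 : k ≤ 1) (hS : 1 ≤ S) : 0 ≤ boxRadius k S :=
  div_nonneg (by nlinarith) (by positivity)

lemma boxRadius_add_mul_sqrt (hk0 : 0 ≤ k) (hk1 : k ≤ 1) (hS : 1 ≤ S) :
    boxRadius k S + k * √(1 + boxRadius k S ^ 2) = S := by
  set u := boxRadius k S with hu
  have hR : √(S ^ 2 + 1 - k ^ 2) ^ 2 = S ^ 2 + 1 - k ^ 2 := sq_sqrt (by nlinarith)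
  have hR0 := sqrt_nonneg (S ^ 2 + 1 - k ^ 2)
  have hden : 0 < S + k * √(S ^ 2 + 1 - k ^ 2) := by positivity
  have hsq : k ^ 2 * (1 + u ^ 2) = (S - u) ^ 2 := by
    rw [hu, boxRadius]
    field_simp
    linear_combination (k ^ 2 * (k ^ 2 - S ^ 2)) * hR
  have hle : u ≤ S := by
    rw [hu, boxRadius, div_le_iff₀ hden]
    nlinarith [mul_nonneg (mul_nonneg (by linarith : (0:ℝ) ≤ S) hk0) hR0]
  have : k * √(1 + u ^ 2) = S - u := by
    rw [← sqrt_sq hk0, ← sqrt_mul (sq_nonneg k), hsq, sqrt_sq (by linarith)]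
  linarith

lemma add_mul_sqrt_le_iff (hk0 : 0 ≤ k) (hk1 : k ≤ 1) (hS : 1 ≤ S) (x : ℝ) :
    x + k * √(1 + x ^ 2) ≤ S ↔ x ≤ boxRadius k S := by
  have h := (strictMono_add_mul_sqrt_one_add_sq hk0 hk1).le_iff_le (a := x) (b := boxRadius k S)
  rwa [boxRadius_add_mul_sqrt hk0 hk1 hS] at h

lemma abs_sinh_add_mul_cosh_le_iff (hk0 : 0 ≤ k) (hk1 : k ≤ 1) (hS : 1 ≤ S) (t : ℝ) :
    |sinh t + k * cosh t| ≤ S ∧ |sinh t - k * cosh t| ≤ S ↔ |sinh t| ≤ boxRadius k S := by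
  have hcosh : cosh t = √(1 + |sinh t| ^ 2) := by
    rw [sq_abs, ← cosh_sq', sqrt_sq (cosh_pos t).le]
  rw [abs_add_le_and_abs_sub_le_iff, abs_of_nonneg (mul_nonneg hk0 (cosh_pos t).le), hcosh,
    add_mul_sqrt_le_iff hk0 hk1 hS]

lemma boxRadius_mul_one_add_le (hk0 : 0 ≤ k) (hk1 : k ≤ 1) (hS : 1 ≤ S) :
    boxRadius k S * (1 + k) ≤ S := by
  have h := boxRadius_add_mul_sqrt hk0 hk1 hS
  have : boxRadius k S ≤ √(1 + boxRadius k S ^ 2) :=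
    le_sqrt_of_sq_le (by linarith)
  nlinarith

lemma boxRadius_le (hk0 : 0 ≤ k) (hk1 : k ≤ 1) (hS : 1 ≤ S) : boxRadius k S ≤ S := by
  nlinarith [boxRadius_mul_one_add_le hk0 hk1 hS, boxRadius_nonneg hk0 hk1 hS]

lemma le_boxRadius_mul_one_add_add (hk0 : 0 ≤ k) (hk1 : k ≤ 1) (hS : 1 ≤ S) :
    S ≤ boxRadius k S * (1 + k) + k := by
  have h := boxRadius_add_mul_sqrt hk0 hk1 hS
  have hu := boxRadius_nonneg hk0 hk1 hS
  have : √(1 + boxRadius k S ^ 2) ≤ 1 + boxRadius k S :=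
    sqrt_le_iff.2 ⟨by linarith, by nlinarith⟩
  nlinarith

lemma tendsto_boxRadius_div (hk0 : 0 ≤ k) (hk1 : k ≤ 1) :
    Tendsto (fun S => boxRadius k S / S) atTop (𝓝 (1 + k)⁻¹) := by
  have hk : 0 < 1 + k := by linarith
  have hlower : Tendsto (fun S => (1 + k)⁻¹ - k / (1 + k) * S⁻¹) atTop (𝓝 (1 + k)⁻¹) := by
    simpa using tendsto_const_nhds.sub (tendsto_inv_atTop_zero.const_mul (k / (1 + k)))
  refine tendsto_of_tendsto_of_tendsto_of_le_of_le' hlower tendsto_const_nhds ?_ ?_ <;>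
    filter_upwards [eventually_ge_atTop 1] with S hS
  · have := le_boxRadius_mul_one_add_add hk0 hk1 hS
    rw [le_div_iff₀ (by linarith)]
    field_simp
    nlinarith
  · have := boxRadius_mul_one_add_le hk0 hk1 hS
    rw [div_le_iff₀ (by linarith)]
    field_simp
    linarith

end BoxRadius

lemma tendsto_setIntegral_boxRadius_div {A : Set ℝ} (hA : MeasurableSet A) (hAfin : volume A ≠ ⊤)
    {k : ℝ → ℝ} (hk : Measurable k) (hk0 : ∀ θ ∈ A, 0 ≤ k θ) (hk1 : ∀ θ ∈ A, k θ ≤ 1) :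
    Tendsto (fun S => ∫ θ in A, boxRadius (k θ) S / S) atTop (𝓝 (∫ θ in A, (1 + k θ)⁻¹)) := by
  refine tendsto_integral_filter_of_dominated_convergence (fun _ => 1)
    (Eventually.of_forall fun S => (by fun_prop : Measurable _).aestronglyMeasurable) ?_
    (integrableOn_const hAfin) ((ae_restrict_iff' hA).2 (ae_of_all _ fun θ hθ =>
      tendsto_boxRadius_div (hk0 θ hθ) (hk1 θ hθ)))
  filter_upwards [eventually_ge_atTop 1] with S hS
  refine (ae_restrict_iff' hA).2 (ae_of_all _ fun θ hθ => ?_)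
  rw [norm_of_nonneg (div_nonneg (boxRadius_nonneg (hk0 θ hθ) (hk1 θ hθ) hS) (by linarith)),
    div_le_one (by linarith)]
  exact boxRadius_le (hk0 θ hθ) (hk1 θ hθ) hS

lemma mem_Ico_zero_pi_div_two_iff {θ : ℝ} :
    θ ∈ Set.Ico 0 (π / 2) ↔ θ ∈ Set.Ico 0 (2 * π) ∧ 0 < cos θ ∧ 0 ≤ sin θ := by
  have hπ := pi_pos
  constructor
  · rintro ⟨h0, h1⟩
    exact ⟨⟨h0, by linarith⟩, cos_pos_of_mem_Ioo ⟨by linarith, h1⟩,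
      sin_nonneg_of_nonneg_of_le_pi h0 (by linarith)⟩
  · rintro ⟨⟨h0, h2⟩, hcos, hsin⟩
    refine ⟨h0, not_le.1 fun h1 => ?_⟩
    rcases le_or_gt θ (3 * π / 2) with h | h
    · linarith [cos_nonpos_of_pi_div_two_le_of_le h1 (by linarith : θ ≤ π + π / 2)]
    · have := sin_neg_of_neg_of_neg_pi_lt (by linarith : θ - 2 * π < 0) (by linarith)
      rw [sin_sub_two_pi] at this
      linarith

lemma cos_nonneg_of_mem_Ico_zero_pi_div_two {θ : ℝ} (hθ : θ ∈ Set.Ico 0 (π / 2)) : 0 ≤ cos θ :=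
  (mem_Ico_zero_pi_div_two_iff.1 hθ).2.1.le

lemma integral_Ico_inv_one_add_cos : ∫ θ in Set.Ico 0 (π / 2), (1 + cos θ)⁻¹ = 1 := by
  have hπ := pi_pos
  have hcos_half : ∀ x ∈ Set.uIcc 0 (π / 2), 0 < cos (x / 2) := by
    intro x hx
    rw [Set.uIcc_of_le (by linarith)] at hx
    exact cos_pos_of_mem_Ioo ⟨by linarith [hx.1], by linarith [hx.2]⟩
  have hone_add_cos : ∀ x, 1 + cos x = 2 * cos (x / 2) ^ 2 := fun x => by
    rw [cos_sq, show 2 * (x / 2) = x by ring]; ring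
  have hderiv : ∀ x ∈ Set.uIcc 0 (π / 2), HasDerivAt (fun θ => tan (θ / 2)) (1 + cos x)⁻¹ x := by
    intro x hx
    refine ((hasDerivAt_tan (hcos_half x hx).ne').comp x
      ((hasDerivAt_id x).div_const 2)).congr_deriv ?_
    rw [hone_add_cos]
    field_simp
  have hcont : ContinuousOn (fun x => (1 + cos x)⁻¹) (Set.uIcc 0 (π / 2)) :=
    (continuous_const.add continuous_cos).continuousOn.inv₀ fun x hx =>
      (hone_add_cos x).trans_ne (by have := hcos_half x hx; positivity)
  rw [setIntegral_congr_set Ico_ae_eq_Ioc, ← intervalIntegral.integral_of_le (by linarith),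
    intervalIntegral.integral_eq_sub_of_hasDerivAt hderiv hcont.intervalIntegrable]
  simp [show π / 2 / 2 = π / 4 by ring]

lemma congrAct_kRot_aDiag (q θ t : ℝ) :
    congrAct (kRot θ * aDiag t) !![q, 0; 0, -q] =
      q • !![sinh t + cos θ * cosh t, sin θ * cosh t; sin θ * cosh t, sinh t - cos θ * cosh t] := by
  obtain ⟨φ, rfl⟩ : ∃ φ, θ = 2 * φ := ⟨θ / 2, by ring⟩
  obtain ⟨s, rfl⟩ : ∃ s, t = 2 * s := ⟨t / 2, by ring⟩
  have hφ := sin_sq_add_cos_sq φ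
  have hexp : exp (2 * s) = exp s ^ 2 := by rw [sq, ← exp_add]; ring_nf
  have hexp' : exp (-(2 * s)) = (exp s)⁻¹ ^ 2 := by rw [← exp_neg, sq, ← exp_add]; ring_nf
  ext i j
  fin_cases i <;> fin_cases j <;>
    simp [congrAct, kRot, aDiag, Matrix.mul_apply, sinh_eq, cosh_eq, cos_two_mul, sin_two_mul,
      neg_div, mul_div_cancel_left₀, exp_neg, hexp, hexp']
  · linear_combination (-q * (exp s)⁻¹ ^ 2) * hφ
  · ring
  · ring
  · linear_combination (q * exp s ^ 2) * hφ

lemma congrAct_kRot_highestWeight (q θ : ℝ) :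
    congrAct (kRot θ) !![q, 0; 0, 0] = (q / 2) • !![1 + cos θ, sin θ; sin θ, 1 - cos θ] := by
  obtain ⟨φ, rfl⟩ : ∃ φ, θ = 2 * φ := ⟨θ / 2, by ring⟩
  ext i j
  fin_cases i <;> fin_cases j <;>
    simp [congrAct, kRot, Matrix.mul_apply, cos_two_mul, sin_two_mul]
  · ring
  · ring
  · ring
  · linear_combination q * sin_sq_add_cos_sq φ

lemma setOf_congrAct_mem_FTregion_eq {q T : ℝ} (hq : 0 < q) (hT : q ≤ T) :
    {p : ℝ × ℝ | p.1 ∈ Set.Ico 0 (2 * π) ∧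
        congrAct (kRot p.1 * aDiag p.2) !![q, 0; 0, -q] ∈ FTregion T} =
      {p : ℝ × ℝ | p.1 ∈ Set.Ico 0 (π / 2) ∧ |sinh p.2| ≤ boxRadius (cos p.1) (T / q)} := by
  ext ⟨θ, t⟩
  have hch := cosh_pos t
  have hS : 1 ≤ T / q := (one_le_div hq).2 hT
  have habs : ∀ x : ℝ, |q * x| ≤ T ↔ |x| ≤ T / q := fun x => by
    rw [abs_mul, abs_of_pos hq, le_div_iff₀ hq, mul_comm]
  simp only [Set.mem_ofPred_eq, FTregion, congrAct_kRot_aDiag, Matrix.smul_apply, of_apply,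
    cons_val', cons_val_zero, cons_val_one, cons_val_fin_one, smul_eq_mul, habs,
    mem_Ico_zero_pi_div_two_iff]
  constructor
  · rintro ⟨hθ, h00, h11, hlt, h01⟩
    have hcos : 0 < cos θ := by nlinarith [mul_pos hq hch]
    have hsin : 0 ≤ sin θ := by nlinarith [mul_pos hq hch]
    exact ⟨⟨hθ, hcos, hsin⟩,
      (abs_sinh_add_mul_cosh_le_iff hcos.le (cos_le_one θ) hS t).1 ⟨h00, h11⟩⟩
  · rintro ⟨⟨hθ, hcos, hsin⟩, ht⟩
    obtain ⟨h00, h11⟩ := (abs_sinh_add_mul_cosh_le_iff hcos.le (cos_le_one θ) hS t).2 ht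
    exact ⟨hθ, h00, h11, by nlinarith [mul_pos (mul_pos hq hcos) hch], by positivity⟩

lemma setOf_highestWeight_mem_cone_eq {q : ℝ} (hq : 0 < q) :
    {θ : ℝ | θ ∈ Set.Ico 0 (2 * π) ∧
        ∃ r : ℝ, 0 ≤ r ∧ ∃ M ∈ FTregion 1, congrAct (kRot θ) !![q, 0; 0, 0] = r • M} =
      Set.Ico 0 (π / 2) := by
  ext θ
  rw [Set.mem_ofPred_eq, mem_Ico_zero_pi_div_two_iff, congrAct_kRot_highestWeight]
  refine and_congr_right fun _ => ⟨?_, fun ⟨hcos, hsin⟩ => ?_⟩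
  · rintro ⟨r, hr, M, ⟨-, -, hlt, h01⟩, hM⟩
    have e00 := congr_fun (congr_fun hM 0) 0
    have e01 := congr_fun (congr_fun hM 0) 1
    have e11 := congr_fun (congr_fun hM 1) 1
    simp only [Matrix.smul_apply, of_apply, cons_val', cons_val_zero, cons_val_one,
      cons_val_fin_one, smul_eq_mul] at e00 e01 e11
    rcases hr.eq_or_lt with rfl | hr
    · constructor <;> nlinarith
    · constructor
      · nlinarith [mul_lt_mul_of_pos_left hlt hr]
      · nlinarith [mul_nonneg hr.le h01]
  · refine ⟨q, hq.le, (1 / 2 : ℝ) • !![1 + cos θ, sin θ; sin θ, 1 - cos θ], ?_, ?_⟩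
    · simp only [FTregion, Set.mem_ofPred_eq, Matrix.smul_apply, of_apply, cons_val',
        cons_val_zero, cons_val_one, cons_val_fin_one, smul_eq_mul]
      refine ⟨?_, ?_, by linarith, by linarith⟩ <;>
        rw [abs_le] <;> constructor <;> linarith [cos_le_one θ]
    · rw [smul_smul, mul_one_div]

lemma formNorm_congrAct_kRot_highestWeight {q θ : ℝ} (hq : 0 ≤ q) (hcos : 0 ≤ cos θ) :
    formNorm (congrAct (kRot θ) !![q, 0; 0, 0]) = q / 2 * (1 + cos θ) := by
  simp only [formNorm, congrAct_kRot_highestWeight, Matrix.smul_apply, of_apply, cons_val',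
    cons_val_zero, cons_val_one, cons_val_fin_one, smul_eq_mul]
  have hsin : |2 * (q / 2 * sin θ)| / 3 ≤ q / 2 * (1 + cos θ) := by
    rw [abs_mul, abs_mul, abs_of_pos two_pos, abs_of_nonneg (by positivity)]
    nlinarith [abs_sin_le_one θ]
  rw [abs_of_nonneg (by positivity : 0 ≤ q / 2 * (1 + cos θ)),
    abs_of_nonneg (by nlinarith [cos_le_one θ] : 0 ≤ q / 2 * (1 - cos θ))]
  exact max_eq_left (max_le hsin (by nlinarith))

lemma setIntegral_congrAct_mem_FTregion {q T : ℝ} (hq : 0 < q) (hT : q ≤ T) :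
    ∫ p in {p : ℝ × ℝ | p.1 ∈ Set.Ico 0 (2 * π) ∧
        congrAct (kRot p.1 * aDiag p.2) !![q, 0; 0, -q] ∈ FTregion T}, cosh p.2 / 4 =
      (∫ θ in Set.Ico 0 (π / 2), boxRadius (cos θ) (T / q)) / 2 := by
  have hS : 1 ≤ T / q := (one_le_div hq).2 hT
  have hu0 : ∀ θ ∈ Set.Ico 0 (π / 2), 0 ≤ boxRadius (cos θ) (T / q) := fun θ hθ =>
    boxRadius_nonneg (cos_nonneg_of_mem_Ico_zero_pi_div_two hθ) (cos_le_one θ) hS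
  have hu_int : IntegrableOn (fun θ => boxRadius (cos θ) (T / q)) (Set.Ico 0 (π / 2)) :=
    Measure.integrableOn_of_bounded (M := T / q) measure_Ico_lt_top.ne
      (by fun_prop : Measurable fun θ => boxRadius (cos θ) (T / q)).aestronglyMeasurable
      ((ae_restrict_iff' measurableSet_Ico).2 (ae_of_all _ fun θ hθ => by
        rw [norm_of_nonneg (hu0 θ hθ)]
        exact boxRadius_le (cos_nonneg_of_mem_Ico_zero_pi_div_two hθ) (cos_le_one θ) hS))
  rw [setOf_congrAct_mem_FTregion_eq hq hT, integral_div,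
    integral_cosh_setOf_abs_sinh_le measurableSet_Ico (by fun_prop) hu0 hu_int,
    integral_const_mul]
  ring

lemma setIntegral_inv_formNorm_highestWeight {q : ℝ} (hq : 0 < q) :
    ∫ θ in {θ : ℝ | θ ∈ Set.Ico 0 (2 * π) ∧
        ∃ r : ℝ, 0 ≤ r ∧ ∃ M ∈ FTregion 1, congrAct (kRot θ) !![q, 0; 0, 0] = r • M},
      (formNorm (congrAct (kRot θ) !![q, 0; 0, 0]))⁻¹ = 2 / q := by
  rw [setOf_highestWeight_mem_cone_eq hq, setIntegral_congr_fun measurableSet_Ico fun θ hθ => by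
      rw [formNorm_congrAct_kRot_highestWeight hq.le (cos_nonneg_of_mem_Ico_zero_pi_div_two hθ),
        mul_inv],
    integral_const_mul, integral_Ico_inv_one_add_cos]
  field_simp

lemma tendsto_setIntegral_boxRadius_div_cos :
    Tendsto (fun S => ∫ θ in Set.Ico 0 (π / 2), boxRadius (cos θ) S / S) atTop (𝓝 1) := by
  simpa only [integral_Ico_inv_one_add_cos] using
    tendsto_setIntegral_boxRadius_div measurableSet_Ico measure_Ico_lt_top.ne measurable_cos
      (fun _ => cos_nonneg_of_mem_Ico_zero_pi_div_two) (fun θ _ => cos_le_one θ)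

theorem volume_eq_theta_integral_split_general (n : ℤ) (hn : 0 < n) :
    Filter.Tendsto
      (fun T : ℝ =>
        (∫ p in {p : ℝ × ℝ | p.1 ∈ Set.Ico 0 (2 * Real.pi) ∧
              congrAct (kRot p.1 * aDiag p.2)
                (!![Real.sqrt (n : ℝ), 0; 0, -Real.sqrt (n : ℝ)]) ∈ FTregion T},
            Real.cosh p.2 / 4) /
          ((T / 4) *
            ∫ θ in {θ : ℝ | θ ∈ Set.Ico 0 (2 * Real.pi) ∧
                ∃ r : ℝ, 0 ≤ r ∧ ∃ M ∈ FTregion 1,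
                  congrAct (kRot θ) (!![Real.sqrt (n : ℝ), 0; 0, 0]) = r • M},
              (formNorm (congrAct (kRot θ) (!![Real.sqrt (n : ℝ), 0; 0, 0])))⁻¹))
      Filter.atTop (nhds 1) := by
  set q := √(n : ℝ)
  have hq : 0 < q := sqrt_pos.2 (by exact_mod_cast hn)
  refine (tendsto_setIntegral_boxRadius_div_cos.comp (tendsto_id.atTop_div_const hq)).congr' ?_
  filter_upwards [eventually_ge_atTop q] with T hT
  rw [Function.comp_apply, id, setIntegral_congrAct_mem_FTregion hq hT,
    setIntegral_inv_formNorm_highestWeight hq, integral_div]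
  field_simp
  ring

/-- **Proposition 9.** Let `n` be a positive perfect square, `Q = [√n, 0, -√n]` and
`Q₁ = [√n, 0, 0]` its highest-weight component, and
`Θ = {θ ∈ [0, 2π) : k(θ)·Q₁ ∈ ⋃_{r ≥ 0} r F₁}`. Then, as `T → ∞`,
`∬_{{(θ,t) : k(θ)a(t)·Q ∈ F_T}} (cosh t)/4 dθ dt ∼ (T/4) ∫_Θ ‖k(θ)·Q₁‖⁻¹ dθ`. -/
theorem volume_eq_theta_integral_split (n : ℤ) (hn : 0 < n) (hsq : ∃ m : ℤ, n = m ^ 2) :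
    Filter.Tendsto
      (fun T : ℝ =>
        (∫ p in {p : ℝ × ℝ | p.1 ∈ Set.Ico 0 (2 * Real.pi) ∧
              congrAct (kRot p.1 * aDiag p.2)
                (!![Real.sqrt (n : ℝ), 0; 0, -Real.sqrt (n : ℝ)]) ∈ FTregion T},
            Real.cosh p.2 / 4) /
          ((T / 4) *
            ∫ θ in {θ : ℝ | θ ∈ Set.Ico 0 (2 * Real.pi) ∧
                ∃ r : ℝ, 0 ≤ r ∧ ∃ M ∈ FTregion 1,
                  congrAct (kRot θ) (!![Real.sqrt (n : ℝ), 0; 0, 0]) = r • M},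
              (formNorm (congrAct (kRot θ) (!![Real.sqrt (n : ℝ), 0; 0, 0])))⁻¹))
      Filter.atTop (nhds 1) :=
  volume_eq_theta_integral_split_general n hn
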